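/- Let f be holomorphic on D_R with f(D_R) ⊆ G, where G ⊆ ℂ is a domain whose convex hull G̃ is not all of ℂ. Then for every n ≥ 0 and every z with |z| = r < R, |f^{(n)}(z) - f^{(n)}(0)| ≤ (2 n! (R^{n+1} - (R - r)^{n+1})) / ((R - r)^{n+1} R^n) · dist(f(0), ∂G̃). -/

import Mathlib

/-!
Separating `f 0` from the open convex set `G̃` by the supporting line at a nearest boundary point
gives a unit `u` with `Re (conj u * (f w - f 0)) ≤ d := dist (f 0, ∂G̃)` on `D_R`. Carathéodory's
inequality: if `Re g ≤ A` on the circle of radius `ρ`, then `‖g⁽ᵏ⁾(0)‖ / k! ≤ 2 (A - Re g(0)) / ρᵏ`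
for `k ≥ 1`, because adding `conj (g - 2A)` does not change the `k`-th Fourier coefficient and turns
the integrand into `2 (Re g - A) ≤ 0`, whose mean is `2 (Re g(0) - A)`. Applied to `conj u * f`
this gives `‖f⁽ᵏ⁾(0)‖ ≤ 2 d k! / Rᵏ`, and summing these bounds over the Taylor expansion of `f⁽ⁿ⁾`
about `0` gives `2 d n! / Rⁿ * ∑_{k ≥ 1} C(n + k, n) (r / R)ᵏ`, where the sum is
`(1 - r / R)⁻⁽ⁿ⁺¹⁾ - 1`.
-/

open Complex Metric Real Set Filter Topology ComplexConjugate

namespace Real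

theorem norm_circleAverage_le {E : Type*} [NormedAddCommGroup E] [NormedSpace ℝ E]
    (f : ℂ → E) (c : ℂ) (R : ℝ) :
    ‖circleAverage f c R‖ ≤ circleAverage (‖f ·‖) c R := by
  simp only [circleAverage_def, norm_smul, Real.norm_eq_abs, smul_eq_mul]
  rw [abs_of_pos (by positivity)]
  gcongr
  exact intervalIntegral.norm_integral_le_integral_norm two_pi_pos.le

theorem circleAverage_conj {f : ℂ → ℂ} {c : ℂ} {R : ℝ} (hf : CircleIntegrable f c R) :
    circleAverage (fun z ↦ conj (f z)) c R = conj (circleAverage f c R) :=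
  conjCLE.toContinuousLinearMap.circleAverage_comp_comm hf

end Real

theorem DiffContOnCl.iteratedDeriv_eq_factorial_smul_circleAverage {E : Type*}
    [NormedAddCommGroup E] [NormedSpace ℂ E] [CompleteSpace E] {f : ℂ → E} {c : ℂ} {R : ℝ}
    (hR : 0 < R) (hf : DiffContOnCl ℂ f (ball c R)) (n : ℕ) :
    iteratedDeriv n f c =
      n.factorial • Real.circleAverage (fun z ↦ ((z - c)⁻¹) ^ n • f z) c R := by
  have hkernel (z : ℂ) :
      (z - c)⁻¹ • ((z - c)⁻¹) ^ n • f z = (1 / (z - c) ^ (n + 1)) • f z := by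
    rw [smul_smul, one_div, pow_succ', inv_pow, mul_inv]
  rw [circleAverage_eq_circleIntegral hR.ne']
  simp only [hkernel, hf.circleIntegral_one_div_sub_center_pow_smul hR n, smul_smul]
  rw [← Nat.cast_smul_eq_nsmul ℂ, smul_smul]
  field_simp [Nat.factorial_ne_zero, pi_ne_zero, I_ne_zero]
  rw [one_smul]

theorem DiffContOnCl.continuousOn_sphere {E : Type*} [NormedAddCommGroup E] [NormedSpace ℂ E]
    {f : ℂ → E} {c : ℂ} {R : ℝ} (hf : DiffContOnCl ℂ f (ball c R)) :
    ContinuousOn f (sphere c R) := by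
  rcases eq_or_ne R 0 with rfl | hR
  · simp
  · exact hf.continuousOn.mono (closure_ball c hR ▸ sphere_subset_closedBall)

section Caratheodory

variable {f : ℂ → ℂ} {c : ℂ} {R : ℝ}

theorem DiffContOnCl.circleAverage_conj_sub_pow_mul_conj_eq_zero (hR : 0 < R)
    (hf : DiffContOnCl ℂ f (ball c R)) {n : ℕ} (hn : n ≠ 0) :
    Real.circleAverage (fun z ↦ conj (z - c) ^ n * conj (f z)) c R = 0 := by
  have hg : DiffContOnCl ℂ (fun z ↦ (z - c) ^ n * f z) (ball c |R|) := by
    rw [abs_of_pos hR]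
    exact ((differentiable_id.sub_const c).pow n).diffContOnCl.smul hf
  simp_rw [← map_pow, ← map_mul]
  rw [circleAverage_conj (hg.continuousOn_sphere.circleIntegrable'), hg.circleAverage]
  simp [hn]

theorem DiffContOnCl.iteratedDeriv_eq_circleAverage_conj_sub_pow_mul (hR : 0 < R)
    (hf : DiffContOnCl ℂ f (ball c R)) (n : ℕ) :
    iteratedDeriv n f c =
      (n.factorial / R ^ (2 * n) : ℂ) *
        Real.circleAverage (fun z ↦ conj (z - c) ^ n * f z) c R := by
  have hsphere : Real.circleAverage (fun z ↦ ((z - c)⁻¹) ^ n • f z) c R =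
      Real.circleAverage (fun z ↦ ((R : ℂ) ^ (2 * n))⁻¹ • (conj (z - c) ^ n * f z)) c R := by
    refine circleAverage_congr_sphere fun z hz ↦ ?_
    have hzc : ‖z - c‖ = R := by simpa [abs_of_pos hR] using hz
    have hinv : (z - c)⁻¹ = conj (z - c) * ((R : ℂ) ^ 2)⁻¹ := by
      rw [inv_def, normSq_eq_norm_sq, hzc]
      push_cast
      rfl
    simp only [smul_eq_mul, hinv, mul_pow, inv_pow, ← pow_mul]
    ring
  rw [hf.iteratedDeriv_eq_factorial_smul_circleAverage hR, hsphere, circleAverage_fun_smul,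
    nsmul_eq_mul, smul_eq_mul, div_eq_mul_inv, mul_assoc]

theorem DiffContOnCl.circleAverage_conj_sub_pow_mul_eq_re (hR : 0 < R)
    (hf : DiffContOnCl ℂ f (ball c R)) (A : ℝ) {n : ℕ} (hn : n ≠ 0) :
    Real.circleAverage (fun z ↦ conj (z - c) ^ n * f z) c R =
      Real.circleAverage (fun z ↦ conj (z - c) ^ n * ((2 * ((f z).re - A) : ℝ) : ℂ)) c R := by
  have hcont := hf.continuousOn_sphere
  have he : ContinuousOn (fun z : ℂ ↦ conj (z - c) ^ n) (sphere c R) := by fun_prop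
  have h₁ : CircleIntegrable (fun z ↦ conj (z - c) ^ n * f z) c R :=
    (he.mul hcont).circleIntegrable hR.le
  have h₂ : CircleIntegrable (fun z ↦ conj (z - c) ^ n * conj (f z - 2 * A)) c R :=
    (he.mul (continuous_conj.comp_continuousOn (hcont.sub continuousOn_const))).circleIntegrable
      hR.le
  rw [← add_zero (Real.circleAverage _ c R),
    ← (hf.sub_const (2 * A : ℂ)).circleAverage_conj_sub_pow_mul_conj_eq_zero hR hn,
    ← circleAverage_fun_add h₁ h₂]
  congr 1
  funext z
  have hre := add_conj (f z)
  have hconj : conj (f z - 2 * A) = conj (f z) - 2 * A := by simp [map_ofNat]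
  rw [hconj]
  push_cast at hre ⊢
  linear_combination conj (z - c) ^ n * hre

theorem DiffContOnCl.norm_iteratedDeriv_le_of_re_le (hR : 0 < R)
    (hf : DiffContOnCl ℂ f (ball c R)) {A : ℝ} (hA : ∀ z ∈ sphere c R, (f z).re ≤ A)
    {n : ℕ} (hn : n ≠ 0) :
    ‖iteratedDeriv n f c‖ ≤ n.factorial * (2 * (A - (f c).re)) / R ^ n := by
  have hg : DiffContOnCl ℂ (fun z ↦ (R : ℂ) ^ n * (2 * (A - f z))) (ball c |R|) := by
    rw [abs_of_pos hR]
    exact ((hf.const_sub _).const_smul (2 : ℂ)).const_smul ((R : ℂ) ^ n)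
  have hbound : ‖Real.circleAverage
      (fun z ↦ conj (z - c) ^ n * ((2 * ((f z).re - A) : ℝ) : ℂ)) c R‖ ≤
        R ^ n * (2 * (A - (f c).re)) :=
    calc _ ≤ Real.circleAverage
          (fun z ↦ ‖conj (z - c) ^ n * ((2 * ((f z).re - A) : ℝ) : ℂ)‖) c R :=
          norm_circleAverage_le _ c R
      _ = Real.circleAverage (fun z ↦ re ((R : ℂ) ^ n * (2 * (A - f z)))) c R := by
          refine circleAverage_congr_sphere fun z hz ↦ ?_
          have hzc : ‖z - c‖ = R := by simpa [abs_of_pos hR] using hz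
          rw [abs_of_pos hR] at hz
          simp only [norm_mul, norm_pow, RCLike.norm_conj, hzc, norm_real, Real.norm_eq_abs,
            abs_two, abs_of_nonpos (sub_nonpos.mpr (hA z hz))]
          simp [← ofReal_pow]
      _ = re (Real.circleAverage (fun z ↦ (R : ℂ) ^ n * (2 * (A - f z))) c R) :=
          reCLM.circleAverage_comp_comm hg.continuousOn_sphere.circleIntegrable'
      _ = R ^ n * (2 * (A - (f c).re)) := by
          rw [hg.circleAverage]
          simp [← ofReal_pow]
  rw [hf.iteratedDeriv_eq_circleAverage_conj_sub_pow_mul hR,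
    hf.circleAverage_conj_sub_pow_mul_eq_re hR A hn, norm_mul]
  calc _ ≤ n.factorial / R ^ (2 * n) * (R ^ n * (2 * (A - (f c).re))) := by
        gcongr
        simp [← ofReal_pow, abs_of_pos hR]
    _ = n.factorial * (2 * (A - (f c).re)) / R ^ n := by
        field_simp
        ring

theorem DifferentiableOn.norm_iteratedDeriv_le_of_re_le (hR : 0 < R)
    (hf : DifferentiableOn ℂ f (ball c R)) {A : ℝ} (hA : ∀ z ∈ ball c R, (f z).re ≤ A)
    {n : ℕ} (hn : n ≠ 0) :
    ‖iteratedDeriv n f c‖ ≤ n.factorial * (2 * (A - (f c).re)) / R ^ n := by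
  have hsmaller : ∀ ρ ∈ Ioo 0 R, ‖iteratedDeriv n f c‖ * ρ ^ n ≤
      n.factorial * (2 * (A - (f c).re)) := by
    rintro ρ ⟨hρ, hρR⟩
    have hsub : closedBall c ρ ⊆ ball c R := closedBall_subset_ball hρR
    rw [← le_div_iff₀ (pow_pos hρ n)]
    exact (hf.diffContOnCl_ball hsub).norm_iteratedDeriv_le_of_re_le hρ
      (fun z hz ↦ hA z (hsub (sphere_subset_closedBall hz))) hn
  rw [le_div_iff₀ (pow_pos hR n)]
  have hlim : Tendsto (fun ρ ↦ ‖iteratedDeriv n f c‖ * ρ ^ n) (𝓝[<] R)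
      (𝓝 (‖iteratedDeriv n f c‖ * R ^ n)) :=
    ((continuous_const.mul (continuous_pow n)).tendsto R).mono_left nhdsWithin_le_nhds
  exact le_of_tendsto hlim (eventually_of_mem (Ioo_mem_nhdsLT hR) hsmaller)

end Caratheodory

theorem Convex.exists_norm_eq_one_inner_sub_le_infDist_frontier {E : Type*}
    [NormedAddCommGroup E] [InnerProductSpace ℝ E] [FiniteDimensional ℝ E] {S : Set E}
    (hS : Convex ℝ S) (hSo : IsOpen S) (hSu : S ≠ univ) {x : E} (hx : x ∈ S) :
    ∃ u : E, ‖u‖ = 1 ∧ ∀ y ∈ S, inner ℝ u (y - x) ≤ infDist x (frontier S) := by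
  obtain ⟨w, hw, hdist⟩ := isClosed_frontier.exists_infDist_eq_dist
    (nonempty_frontier_iff.mpr ⟨⟨x, hx⟩, hSu⟩) x
  obtain ⟨ℓ, hℓ⟩ := geometric_hahn_banach_open_point hS hSo (hSo.frontier_eq ▸ hw).2
  set v := (InnerProductSpace.toDual ℝ E).symm ℓ
  have hv : ∀ y, inner ℝ v y = ℓ y := fun y ↦ InnerProductSpace.toDual_symm_apply
  have hv0 : v ≠ 0 := by
    rintro hv0
    simpa [← hv, hv0] using hℓ x hx
  have hu : ‖‖v‖⁻¹ • v‖ = 1 := by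
    rw [norm_smul, norm_inv, norm_norm, inv_mul_cancel₀ (norm_ne_zero_iff.mpr hv0)]
  refine ⟨‖v‖⁻¹ • v, hu, fun y hy ↦ ?_⟩
  calc inner ℝ (‖v‖⁻¹ • v) (y - x) ≤ inner ℝ (‖v‖⁻¹ • v) (w - x) := by
        simp only [real_inner_smul_left, inner_sub_right, hv]
        gcongr
        exact (hℓ y hy).le
    _ ≤ ‖‖v‖⁻¹ • v‖ * ‖w - x‖ := real_inner_le_norm _ _
    _ = infDist x (frontier S) := by
        rw [hu, one_mul, hdist, dist_eq_norm']

section Taylor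

variable {E : Type*} [NormedAddCommGroup E] [NormedSpace ℂ E] [CompleteSpace E]
  {f : ℂ → E} {c z : ℂ} {R : ℝ}

theorem DifferentiableOn.hasSum_taylorSeries_iteratedDeriv (hf : DifferentiableOn ℂ f (ball c R))
    (hz : z ∈ ball c R) (n : ℕ) :
    HasSum (fun k ↦ (k.factorial : ℂ)⁻¹ • (z - c) ^ k • iteratedDeriv (k + n) f c)
      (iteratedDeriv n f z) := by
  have hfn : DifferentiableOn ℂ (iteratedDeriv n f) (ball c R) := by
    rw [iteratedDeriv_eq_iterate]
    exact ((hf.analyticOnNhd isOpen_ball).iterated_deriv n).differentiableOn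
  simpa only [iteratedDeriv_eq_iterate, ← Function.iterate_add_apply]
    using Complex.hasSum_taylorSeries_on_ball hfn hz

theorem DifferentiableOn.norm_iteratedDeriv_sub_le {r C : ℝ}
    (hf : DifferentiableOn ℂ f (ball c R)) (hr : r < R) (hz : ‖z - c‖ = r)
    (hC : ∀ k ≠ 0, ‖iteratedDeriv k f c‖ ≤ k.factorial * C / R ^ k) (n : ℕ) :
    ‖iteratedDeriv n f z - iteratedDeriv n f c‖ ≤
      C * n.factorial * (R ^ (n + 1) - (R - r) ^ (n + 1)) / ((R - r) ^ (n + 1) * R ^ n) := by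
  have hr0 : 0 ≤ r := hz ▸ norm_nonneg _
  have hR : 0 < R := hr0.trans_lt hr
  have hR0 : R ≠ 0 := hR.ne'
  have hx : ‖r / R‖ < 1 := by
    rwa [Real.norm_eq_abs, abs_of_nonneg (by positivity), div_lt_one hR]
  have hterm (k : ℕ) :
      ‖((k + 1).factorial : ℂ)⁻¹ • (z - c) ^ (k + 1) • iteratedDeriv (k + 1 + n) f c‖ ≤
        C * n.factorial / R ^ n * ((k + 1 + n).choose n * (r / R) ^ (k + 1)) := by
    have hfact : ((k + 1 + n).factorial : ℝ) =
        (k + 1 + n).choose n * (k + 1).factorial * n.factorial := by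
      exact_mod_cast (Nat.add_choose_mul_factorial_mul_factorial (k + 1) n).symm
    rw [norm_smul, norm_smul, norm_inv, norm_pow, hz, Complex.norm_natCast]
    calc _ ≤ ((k + 1).factorial : ℝ)⁻¹ *
          (r ^ (k + 1) * ((k + 1 + n).factorial * C / R ^ (k + 1 + n))) := by
          gcongr
          exact hC _ (by omega)
      _ = _ := by
          rw [hfact, div_pow]
          field_simp
          ring
  have htaylor := (hasSum_nat_add_iff' 1).mpr
    (hf.hasSum_taylorSeries_iteratedDeriv (by rwa [mem_ball_iff_norm, hz]) n)
  have hgeom : HasSum (fun k : ℕ ↦ ((k + n).choose n : ℝ) * (r / R) ^ k)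
      (1 / (1 - r / R) ^ (n + 1)) :=
    hasSum_choose_mul_geometric_of_norm_lt_one n hx
  have hgeom' := ((hasSum_nat_add_iff' 1).mpr hgeom).mul_left (C * n.factorial / R ^ n)
  simp only [Finset.sum_range_one, Nat.factorial_zero, Nat.cast_one, inv_one, pow_zero, one_smul,
    zero_add, Nat.choose_self, mul_one] at htaylor hgeom'
  calc _ ≤ C * n.factorial / R ^ n * (1 / (1 - r / R) ^ (n + 1) - 1) :=
        htaylor.norm_le_of_bounded hgeom' hterm
    _ = _ := by
        have hRr : R - r ≠ 0 := by linarith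
        rw [one_sub_div hR0, div_pow]
        field_simp

end Taylor

theorem stmt15_general (R r : ℝ) (f : ℂ → ℂ) (G : Set ℂ)
    (h3 : r < R)
    (hG : IsOpen G)
    (hhull : convexHull ℝ G ≠ Set.univ)
    (hf : DifferentiableOn ℂ f (ball 0 R))
    (hmaps : Set.MapsTo f (ball 0 R) G)
    (z : ℂ) (hz : ‖z‖ = r) (n : ℕ) :
    ‖iteratedDeriv n f z - iteratedDeriv n f 0‖ ≤
      2 * n.factorial * (R ^ (n + 1) - (R - r) ^ (n + 1)) / ((R - r) ^ (n + 1) * R ^ n) *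
        infDist (f 0) (frontier (convexHull ℝ G)) := by
  have hR : 0 < R := (hz ▸ norm_nonneg z).trans_lt h3
  have hhullG : ∀ w ∈ ball (0 : ℂ) R, f w ∈ convexHull ℝ G :=
    fun w hw ↦ subset_convexHull ℝ G (hmaps hw)
  obtain ⟨u, hu, hsep⟩ :=
    (convex_convexHull ℝ G).exists_norm_eq_one_inner_sub_le_infDist_frontier hG.convexHull hhull
      (hhullG 0 (mem_ball_self hR))
  set d := infDist (f 0) (frontier (convexHull ℝ G))
  have hre : ∀ w ∈ ball (0 : ℂ) R, (conj u * f w).re ≤ (conj u * f 0).re + d := by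
    intro w hw
    have := hsep (f w) (hhullG w hw)
    rw [Complex.inner, mul_comm, mul_sub, sub_re] at this
    linarith
  have hcoeff : ∀ k ≠ 0, ‖iteratedDeriv k f 0‖ ≤ k.factorial * (2 * d) / R ^ k := by
    intro k hk
    have := (hf.const_mul (conj u)).norm_iteratedDeriv_le_of_re_le hR hre hk
    rwa [iteratedDeriv_const_mul_field, norm_mul, RCLike.norm_conj, hu, one_mul,
      add_sub_cancel_left] at this
  calc _ ≤ 2 * d * n.factorial * (R ^ (n + 1) - (R - r) ^ (n + 1)) /
          ((R - r) ^ (n + 1) * R ^ n) :=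
        hf.norm_iteratedDeriv_sub_le h3 (by rwa [sub_zero]) hcoeff n
    _ = _ := by ring

theorem stmt15 (R r : ℝ) (f : ℂ → ℂ) (G : Set ℂ)
    (hR : 0 < R) (hr : 0 ≤ r) (h3 : r < R)
    (hG : IsOpen G) (hGconn : IsConnected G)
    (hhull : convexHull ℝ G ≠ Set.univ)
    (hf : DifferentiableOn ℂ f (ball 0 R))
    (hmaps : Set.MapsTo f (ball 0 R) G)
    (z : ℂ) (hz : ‖z‖ = r) (n : ℕ) :
    ‖iteratedDeriv n f z - iteratedDeriv n f 0‖ ≤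
      2 * n.factorial * (R ^ (n + 1) - (R - r) ^ (n + 1)) / ((R - r) ^ (n + 1) * R ^ n) *
        infDist (f 0) (frontier (convexHull ℝ G)) :=
  stmt15_general R r f G h3 hG hhull hf hmaps z hz n
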